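/- Let z ∈ ℂ ∖ {0} and let k₁, k₂ ∈ ℂ satisfy P(k₁, z) = P(k₂, z) = 0 and k₁² ≠ k₂². Set c_j := −i·((1/2)k_j² + 17/8)/z for j = 1, 2, and define the ℂ²-valued functions Ψ_j(r) := (e^{i k_j r}, c_j·e^{i k_j r})ᵗ and Ψ̃_j(r) := (e^{−i k_j r}, c_j·e^{−i k_j r})ᵗ for r ∈ ℝ. Then for every r ∈ ℝ: W(Ψ₁, Ψ̃₂)(r) = 0, W(Ψ₂, Ψ̃₁)(r) = 0, W(Ψ₁, Ψ̃₁)(r) = −2i·k₁·(1 − c₁²), and W(Ψ₂, Ψ̃₂)(r) = −2i·k₂·(1 − c₂²). -/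

import Mathlib

/-- The quartic `P(k,z) = (1/4)k⁴ + (9/8)k² + 17/64 − z²`. -/
noncomputable def Pquart (k z : ℂ) : ℂ := (1/4) * k ^ 4 + (9/8) * k ^ 2 + 17/64 - z ^ 2

/-- The coefficient `c(k,z) = −i((1/2)k² + 17/8)/z`. -/
noncomputable def cCoef (k z : ℂ) : ℂ := -Complex.I * ((1/2) * k ^ 2 + 17/8) / z

/-- `Ψ(r) = (e^{ikr}, c·e^{ikr})ᵗ`. -/
noncomputable def PsiP (k c : ℂ) (r : ℝ) : ℂ × ℂ :=
  (Complex.exp (Complex.I * k * r), c * Complex.exp (Complex.I * k * r))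

/-- `Ψ̃(r) = (e^{−ikr}, c·e^{−ikr})ᵗ`. -/
noncomputable def PsiM (k c : ℂ) (r : ℝ) : ℂ × ℂ :=
  (Complex.exp (-(Complex.I * k * r)), c * Complex.exp (-(Complex.I * k * r)))

/-- The `σ₃`-Wronskian `W(f,g)(r) = f(r)ᵗσ₃g'(r) − f'(r)ᵗσ₃g(r)` for
`ℂ²`-valued functions written as pairs. -/
noncomputable def Wr (f g : ℝ → ℂ × ℂ) (r : ℝ) : ℂ :=
  ((f r).1 * deriv (fun t => (g t).1) r - (f r).2 * deriv (fun t => (g t).2) r) -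
    (deriv (fun t => (f t).1) r * (g r).1 - deriv (fun t => (f t).2) r * (g r).2)

/-! Both `Ψ` and `Ψ̃` are plane waves `r ↦ (1, c)·e^{ikr}`, whose `σ₃`-Wronskian is an explicit
exponential; it vanishes for `Ψ₁, Ψ̃₂` because the two roots `k₁², k₂²` of the quadratic
`u ↦ P(√u, z)` make `c₁ c₂ = 1` by Vieta's formulas. -/

open Complex

lemma hasDerivAt_cexp_mul_ofReal (a : ℂ) (r : ℝ) :
    HasDerivAt (fun t : ℝ => cexp (a * t)) (a * cexp (a * r)) r := by
  simpa [mul_comm] using ((hasDerivAt_id r).ofReal_comp.const_mul a).cexp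

lemma deriv_cexp_mul_ofReal (a : ℂ) (r : ℝ) :
    deriv (fun t : ℝ => cexp (a * t)) r = a * cexp (a * r) :=
  (hasDerivAt_cexp_mul_ofReal a r).deriv

lemma deriv_const_mul_cexp_mul_ofReal (c a : ℂ) (r : ℝ) :
    deriv (fun t : ℝ => c * cexp (a * t)) r = c * (a * cexp (a * r)) :=
  ((hasDerivAt_cexp_mul_ofReal a r).const_mul c).deriv

lemma PsiM_eq_PsiP_neg (k c : ℂ) : PsiM k c = PsiP (-k) c := by
  funext r
  simp only [PsiM, PsiP, mul_neg, neg_mul]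

lemma Wr_PsiP_PsiP (k c k' c' : ℂ) (r : ℝ) :
    Wr (PsiP k c) (PsiP k' c') r = I * (k' - k) * (1 - c * c') * cexp (I * (k + k') * r) := by
  simp only [Wr, PsiP, deriv_cexp_mul_ofReal, deriv_const_mul_cexp_mul_ofReal]
  rw [show I * (k + k') * r = I * k * r + I * k' * r by ring, Complex.exp_add]
  ring

lemma Wr_PsiP_PsiM (k c k' c' : ℂ) (r : ℝ) :
    Wr (PsiP k c) (PsiM k' c') r = -I * (k + k') * (1 - c * c') * cexp (I * (k - k') * r) := by
  rw [PsiM_eq_PsiP_neg, Wr_PsiP_PsiP]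
  ring_nf

lemma Wr_PsiP_PsiM_self (k c : ℂ) (r : ℝ) :
    Wr (PsiP k c) (PsiM k c) r = -2 * I * k * (1 - c ^ 2) := by
  rw [Wr_PsiP_PsiM, sub_self, mul_zero, zero_mul, Complex.exp_zero]
  ring

lemma Pquart_sq_add_sq_of_eq_zero {z k₁ k₂ : ℂ} (h1 : Pquart k₁ z = 0) (h2 : Pquart k₂ z = 0)
    (hk : k₁ ^ 2 ≠ k₂ ^ 2) : k₁ ^ 2 + k₂ ^ 2 = -9 / 2 := by
  have hfac : (k₁ ^ 2 - k₂ ^ 2) * ((k₁ ^ 2 + k₂ ^ 2) / 4 + 9 / 8) = 0 := by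
    unfold Pquart at h1 h2
    linear_combination h1 - h2
  have hsum := (mul_eq_zero.mp hfac).resolve_left (sub_ne_zero.mpr hk)
  linear_combination 4 * hsum

lemma cCoef_mul_cCoef_of_Pquart_eq_zero {z k₁ k₂ : ℂ} (hz : z ≠ 0) (h1 : Pquart k₁ z = 0)
    (h2 : Pquart k₂ z = 0) (hk : k₁ ^ 2 ≠ k₂ ^ 2) : cCoef k₁ z * cCoef k₂ z = 1 := by
  have hsum := Pquart_sq_add_sq_of_eq_zero h1 h2 hk
  have hprod : (1 / 2 * k₁ ^ 2 + 17 / 8) * (1 / 2 * k₂ ^ 2 + 17 / 8) = -z ^ 2 := by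
    unfold Pquart at h1
    linear_combination -h1 + (k₁ ^ 2 / 4 + 17 / 16) * hsum
  unfold cCoef
  rw [div_mul_div_comm, div_eq_one_iff_eq (mul_ne_zero hz hz)]
  linear_combination (1 / 2 * k₁ ^ 2 + 17 / 8) * (1 / 2 * k₂ ^ 2 + 17 / 8) * I_sq - hprod

theorem model_wronskians (z k₁ k₂ : ℂ) (hz : z ≠ 0)
    (h1 : Pquart k₁ z = 0) (h2 : Pquart k₂ z = 0) (hk : k₁ ^ 2 ≠ k₂ ^ 2) :
    ∀ r : ℝ,
      Wr (PsiP k₁ (cCoef k₁ z)) (PsiM k₂ (cCoef k₂ z)) r = 0 ∧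
      Wr (PsiP k₂ (cCoef k₂ z)) (PsiM k₁ (cCoef k₁ z)) r = 0 ∧
      Wr (PsiP k₁ (cCoef k₁ z)) (PsiM k₁ (cCoef k₁ z)) r =
        -2 * Complex.I * k₁ * (1 - cCoef k₁ z ^ 2) ∧
      Wr (PsiP k₂ (cCoef k₂ z)) (PsiM k₂ (cCoef k₂ z)) r =
        -2 * Complex.I * k₂ * (1 - cCoef k₂ z ^ 2) := by
  have hc := cCoef_mul_cCoef_of_Pquart_eq_zero hz h1 h2 hk
  have hc' : cCoef k₂ z * cCoef k₁ z = 1 := by rw [mul_comm, hc]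
  intro r
  refine ⟨?_, ?_, Wr_PsiP_PsiM_self _ _ r, Wr_PsiP_PsiM_self _ _ r⟩
  · rw [Wr_PsiP_PsiM, hc, sub_self, mul_zero, zero_mul]
  · rw [Wr_PsiP_PsiM, hc', sub_self, mul_zero, zero_mul]
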